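/- arXiv:1606.05380 — 3 statements merged into one kernel-verified Lean document; each statement's English description precedes it below -/
import Mathlib

section
/- Every generator of a non-singular quadric Q in PG(n,2) of projective index g, relative to a fixed s-space α contained in Q with 0 ≤ s < g, contains at least one point of type (ii), i.e., a point P ∉ α such that the span ⟨α,P⟩ is an (s+1)-space contained in Q. -/
section Defs

variable {K V : Type*} [Field K] [AddCommGroup V] [Module K V]

/-- A submodule is totally singular for `Q` if `Q` vanishes on it
(i.e. the corresponding projective subspace is contained in the quadric). -/
def totallySingular (Q : QuadraticForm K V) (W : Submodule K V) : Prop :=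
  ∀ v ∈ W, Q v = 0

/-- The quadric defined by `Q` is non-singular: no nonzero singular vector lies
in the radical of the polar form. -/
def quadricNonsingular (Q : QuadraticForm K V) : Prop :=
  ∀ v : V, v ≠ 0 → Q v = 0 → ∃ w : V, QuadraticMap.polar ⇑Q v w ≠ 0

/-- The quadric of `Q` has projective index `g`: it contains a projective subspace of
dimension `g` and none of larger dimension. -/
def projIndex (Q : QuadraticForm K V) (g : ℕ) : Prop :=
  (∃ W : Submodule K V, totallySingular Q W ∧ Module.finrank K W = g + 1) ∧
  ∀ W : Submodule K V, totallySingular Q W → Module.finrank K W ≤ g + 1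

/-- A generator: a `g`-dimensional projective subspace contained in the quadric. -/
def isGenerator (Q : QuadraticForm K V) (g : ℕ) (W : Submodule K V) : Prop :=
  totallySingular Q W ∧ Module.finrank K W = g + 1

/-- The points of the quadric, as projective points. -/
abbrev QuadricPoint (Q : QuadraticForm K V) :=
  {p : Projectivization K V // Q p.rep = 0}

/-- The point-graph of the quadric: two points are adjacent when the line joining them
is contained in the quadric. -/
def pointGraph (Q : QuadraticForm K V) : SimpleGraph (QuadricPoint Q) where
  Adj p q := p ≠ q ∧ totallySingular Q (p.1.submodule ⊔ q.1.submodule)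
  symm := by
    refine ⟨?_⟩
    rintro p q ⟨h1, h2⟩
    exact ⟨h1.symm, by rwa [sup_comm]⟩
  loopless := by refine ⟨?_⟩; rintro p ⟨h1, -⟩; exact h1 rfl

/-- Type (ii) points relative to `α`: points outside `α` lying in an
`(s+1)`-space of the quadric through `α`. -/
def typeII (Q : QuadraticForm K V) (α : Submodule K V) (p : QuadricPoint Q) : Prop :=
  p.1.rep ∉ α ∧ totallySingular Q (α ⊔ p.1.submodule)

/-- Type (iii) points relative to `α`: the remaining points outside `α`. -/
def typeIII (Q : QuadraticForm K V) (α : Submodule K V) (p : QuadricPoint Q) : Prop :=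
  p.1.rep ∉ α ∧ ¬ totallySingular Q (α ⊔ p.1.submodule)

/-- A pair of points, one of type (ii), the other of type (iii). -/
def mixedPair (Q : QuadraticForm K V) (α : Submodule K V) (p q : QuadricPoint Q) : Prop :=
  (typeII Q α p ∧ typeIII Q α q) ∨ (typeII Q α q ∧ typeIII Q α p)

lemma mixedPair_comm (Q : QuadraticForm K V) (α : Submodule K V) (p q : QuadricPoint Q) :
    mixedPair Q α p q ↔ mixedPair Q α q p := by
  unfold mixedPair; exact or_comm

/-- The line joining `p` and `q` is a 2-secant: it meets the quadric in exactly two points. -/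
def secant2 (Q : QuadraticForm K V) (p q : QuadricPoint Q) : Prop :=
  {x : Projectivization K V | x.rep ∈ p.1.submodule ⊔ q.1.submodule ∧ Q x.rep = 0}.ncard = 2

lemma secant2_comm (Q : QuadraticForm K V) (p q : QuadricPoint Q) :
    secant2 Q p q ↔ secant2 Q q p := by
  unfold secant2; rw [sup_comm]

/-- The switched graph `Γ_s`: same as the point-graph, except that a type (ii) point and a
type (iii) point are adjacent iff their joining line is a 2-secant of the quadric. -/
def gammaS (Q : QuadraticForm K V) (α : Submodule K V) : SimpleGraph (QuadricPoint Q) where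
  Adj p q := p ≠ q ∧ (mixedPair Q α p q → secant2 Q p q) ∧
    (¬ mixedPair Q α p q → totallySingular Q (p.1.submodule ⊔ q.1.submodule))
  symm := by
    refine ⟨?_⟩
    rintro p q ⟨h1, h2, h3⟩
    refine ⟨h1.symm, fun h => (secant2_comm Q p q).mp (h2 ((mixedPair_comm Q α q p).mp h)),
      fun h => ?_⟩
    have := h3 (fun hx => h ((mixedPair_comm Q α p q).mp hx))
    rwa [sup_comm]
  loopless := by refine ⟨?_⟩; rintro p ⟨h1, -⟩; exact h1 rfl

/-- `v` has exactly half of the vertices of `X` as neighbours. -/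
def halfIn {Ω : Type*} (G : SimpleGraph Ω) (X : Set Ω) (v : Ω) : Prop :=
  2 * (X ∩ G.neighborSet v).ncard = X.ncard

/-- The Godsil–McKay switch of `G` with respect to the part `X`: every vertex outside `X`
having exactly half of `X` as neighbours has its edges to `X` complemented. -/
def gmSwitch {Ω : Type*} (G : SimpleGraph Ω) (X : Set Ω) : SimpleGraph Ω where
  Adj v w :=
    (((v ∈ X ∧ w ∉ X ∧ halfIn G X w) ∨ (w ∈ X ∧ v ∉ X ∧ halfIn G X v)) ∧
        ¬ G.Adj v w ∧ v ≠ w) ∨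
    (¬ ((v ∈ X ∧ w ∉ X ∧ halfIn G X w) ∨ (w ∈ X ∧ v ∉ X ∧ halfIn G X v)) ∧ G.Adj v w)
  symm := by
    refine ⟨?_⟩
    rintro v w (⟨h1, h2, h3⟩ | ⟨h1, h2⟩)
    · exact Or.inl ⟨h1.symm, fun h => h2 h.symm, h3.symm⟩
    · exact Or.inr ⟨fun h => h1 h.symm, h2.symm⟩
  loopless := by
    refine ⟨?_⟩
    rintro v (⟨h1, h2, h3⟩ | ⟨h1, h2⟩)
    · exact h3 rfl
    · exact G.loopless.irrefl v h2

noncomputable instance {K V : Type*} [Field K] [AddCommGroup V] [Module K V] [Finite V]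
    (Q : QuadraticForm K V) : Fintype (QuadricPoint Q) := by
  have : Finite (Projectivization K V) := Quotient.finite _
  exact Fintype.ofFinite _

end Defs

/-! The vectors of `W` polar to `α` form the kernel of `W → α*`, `w ↦ polar(·, w)`. As the
polar form vanishes on `W`, the image of this map annihilates `α ∩ W`, so the kernel has
dimension at least `dim W - dim α + dim (α ∩ W) > dim (α ∩ W)` and contains some `x ∉ α`.
Such an `x` is singular and polar to `α`, so `⟨α, x⟩` is totally singular. -/

open Module

section

variable {K V : Type*} [Field K] [AddCommGroup V] [Module K V]

theorem exists_mem_notMem_orthogonal_of_finrank_lt (B : LinearMap.BilinForm K V)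
    {α W : Submodule K V} [FiniteDimensional K α]
    (hB : ∀ a ∈ α ⊓ W, ∀ w ∈ W, B a w = 0) (hlt : finrank K α < finrank K W) :
    ∃ x ∈ W, x ∉ α ∧ ∀ a ∈ α, B a x = 0 := by
  have : FiniteDimensional K W := Module.finite_of_finrank_pos (by omega)
  let ψ : W →ₗ[K] Dual K α := (B.flip.compl₂ α.subtype).domRestrict W
  let S : Submodule K α := (α ⊓ W).comap α.subtype
  have hrange : LinearMap.range ψ ≤ S.dualAnnihilator := by
    rintro _ ⟨w, rfl⟩
    exact (Submodule.mem_dualAnnihilator _).2 fun a ha => hB a ha w w.2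
  have hS : finrank K S = finrank K (α ⊓ W : Submodule K V) :=
    (Submodule.comapSubtypeEquivOfLe inf_le_left).finrank_eq
  have hker : finrank K (α ⊓ W : Submodule K V) < finrank K (LinearMap.ker ψ) := by
    have := Submodule.finrank_mono hrange
    have := LinearMap.finrank_range_add_finrank_ker ψ
    have := Subspace.finrank_add_finrank_dualAnnihilator_eq S
    omega
  by_contra! h
  have hle : (LinearMap.ker ψ).map W.subtype ≤ α ⊓ W := by
    rintro _ ⟨w, hw, rfl⟩
    refine ⟨?_, w.2⟩
    by_contra hwα
    obtain ⟨a, ha, hBa⟩ := h w w.2 hwα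
    exact hBa (LinearMap.congr_fun (LinearMap.mem_ker.1 hw) ⟨a, ha⟩)
  have := Submodule.finrank_mono hle
  rw [Submodule.finrank_map_subtype_eq] at this
  omega

theorem totallySingular.polar_eq_zero {Q : QuadraticForm K V} {W : Submodule K V}
    (hW : totallySingular Q W) {v w : V} (hv : v ∈ W) (hw : w ∈ W) :
    QuadraticMap.polar Q v w = 0 := by
  simp [QuadraticMap.polar, hW v hv, hW w hw, hW _ (W.add_mem hv hw)]

theorem totallySingular_sup_span_singleton {Q : QuadraticForm K V} {α : Submodule K V}
    (hα : totallySingular Q α) {x : V} (hx : Q x = 0)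
    (horth : ∀ a ∈ α, QuadraticMap.polar Q a x = 0) :
    totallySingular Q (α ⊔ Submodule.span K {x}) := by
  intro v hv
  obtain ⟨a, ha, _, hc, rfl⟩ := Submodule.mem_sup.1 hv
  obtain ⟨c, rfl⟩ := Submodule.mem_span_singleton.1 hc
  rw [QuadraticMap.map_add ⇑Q, QuadraticMap.map_smul, QuadraticMap.polar_smul_right, hα a ha, hx,
    horth a ha]
  simp

end

theorem generator_contains_typeII_point_general (n g s : ℕ) (hs : s < g)
    (Q : QuadraticForm (ZMod 2) (Fin (n + 1) → ZMod 2))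
    (α : Submodule (ZMod 2) (Fin (n + 1) → ZMod 2)) (hα : totallySingular Q α)
    (hαd : Module.finrank (ZMod 2) ↥α = s + 1)
    (W : Submodule (ZMod 2) (Fin (n + 1) → ZMod 2)) (hW : isGenerator Q g W) :
    ∃ x ∈ W, x ≠ 0 ∧ x ∉ α ∧
      totallySingular Q (α ⊔ Submodule.span (ZMod 2) {x}) ∧
      Module.finrank (ZMod 2) ↥(α ⊔ Submodule.span (ZMod 2) {x}) = s + 2 := by
  obtain ⟨hWs, hWd⟩ := hW
  obtain ⟨x, hxW, hxα, horth⟩ :=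
    exists_mem_notMem_orthogonal_of_finrank_lt (QuadraticMap.polarBilin Q) (α := α) (W := W)
      (fun a ha w hw => hWs.polar_eq_zero ha.2 hw) (by omega)
  refine ⟨x, hxW, fun h => hxα (h ▸ α.zero_mem), hxα,
    totallySingular_sup_span_singleton hα (hWs x hxW) horth, ?_⟩
  rw [Submodule.finrank_sup_span_singleton hxα, hαd]

theorem generator_contains_typeII_point (n g s : ℕ) (hs : s < g)
    (Q : QuadraticForm (ZMod 2) (Fin (n + 1) → ZMod 2)) (hQ : quadricNonsingular Q)
    (hgi : projIndex Q g)
    (α : Submodule (ZMod 2) (Fin (n + 1) → ZMod 2)) (hα : totallySingular Q α)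
    (hαd : Module.finrank (ZMod 2) ↥α = s + 1)
    (W : Submodule (ZMod 2) (Fin (n + 1) → ZMod 2)) (hW : isGenerator Q g W) :
    ∃ x ∈ W, x ≠ 0 ∧ x ∉ α ∧
      totallySingular Q (α ⊔ Submodule.span (ZMod 2) {x}) ∧
      Module.finrank (ZMod 2) ↥(α ⊔ Submodule.span (ZMod 2) {x}) = s + 2 :=
  generator_contains_typeII_point_general n g s hs Q α hα hαd W hW
end

section
/- Let Γ_s be the switched graph obtained from the point-graph Γ of a non-singular quadric Q in PG(n,2) of projective index g, using an s-space α in Q with 0 ≤ s < g. If Σ and Π are generators of Q such that α ⊂ Σ, α ⊄ Π, and Σ ∩ Π is a (g−1)-space, then the set consisting of the points of α ∩ Π, the points of Σ not in α ∪ Π, and the points of Π∖Σ is a clique of Γ_s of size 2^{g+1}−1. -/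
/-!
Inside a generator through `α` no point is of type (iii), and among the points of `Π` in the
set none is of type (ii), so pairs inside `Σ` or inside `Π` keep their adjacency along a singular
line. The remaining pairs are `u ∈ Σ ∖ (α ∪ Π)`, of type (ii), and `v ∈ Π ∖ Σ`. Maximality of
generators gives: if `H` is a hyperplane of a generator `W`, `x ∈ W ∖ H`, and `y ∉ W` is
singular and perpendicular to `H`, then `x` and `y` are not perpendicular. Applied with
`H = Σ ∩ Π` and `y ∈ α ∖ Π` it makes `v` of type (iii); applied to `u, v` it makes the line `uv`
non-singular, i.e. over `𝔽₂` a 2-secant. For the count, the set has as many vectors as `Π`,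
because `|α| = 2 |α ∩ Π|` and `|Σ| = |Π| = 2 |Σ ∩ Π|`; removing the zero vector leaves
`2^(g+1) - 1` points.
-/

open Module Submodule QuadraticMap

section Quadric

variable {K V : Type*} [Field K] [AddCommGroup V] [Module K V] {Q : QuadraticForm K V}
  {W : Submodule K V}

lemma totallySingular.mono {W' : Submodule K V} (hW : totallySingular Q W) (h : W' ≤ W) :
    totallySingular Q W' :=
  fun v hv => hW v (h hv)

lemma totallySingular.polar_eq_zero_s10 (hW : totallySingular Q W) {u v : V} (hu : u ∈ W)
    (hv : v ∈ W) : polar Q u v = 0 := by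
  simp [polar, hW _ (add_mem hu hv), hW _ hu, hW _ hv]

lemma totallySingular.sup_span_singleton (hW : totallySingular Q W) {v : V} (hv : Q v = 0)
    (hperp : ∀ w ∈ W, polar Q w v = 0) : totallySingular Q (W ⊔ K ∙ v) := by
  intro x hx
  obtain ⟨w, hw, y, hy, rfl⟩ := mem_sup.mp hx
  obtain ⟨c, rfl⟩ := mem_span_singleton.mp hy
  have hexp : Q (w + c • v) = polar Q w (c • v) + Q w + Q (c • v) := by rw [polar]; ring
  rw [hexp, polar_smul_right, QuadraticMap.map_smul, hperp w hw, hW w hw, hv]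
  simp

lemma sup_span_singleton_eq_of_finrank_add_one [FiniteDimensional K V] {H : Submodule K V}
    {x : V} (hHW : H ≤ W) (hx : x ∈ W) (hxH : x ∉ H) (hd : finrank K H + 1 = finrank K W) :
    H ⊔ K ∙ x = W := by
  refine eq_of_le_of_finrank_le (sup_le hHW (span_singleton_le_iff_mem x W |>.mpr hx)) ?_
  have hlt : H < H ⊔ K ∙ x :=
    lt_of_le_of_ne le_sup_left fun h => hxH (h ▸ mem_sup_right (mem_span_singleton_self x))
  have := finrank_lt_finrank_of_lt hlt
  omega

lemma finrank_inf_add_one_of_not_le [FiniteDimensional K V] {α S P : Submodule K V}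
    (hαS : α ≤ S) (hαP : ¬ α ≤ P) (hd : finrank K ↥(S ⊓ P) + 1 = finrank K S) :
    finrank K ↥(α ⊓ P) + 1 = finrank K α := by
  have hlt : α ⊓ P < α := lt_of_le_of_ne inf_le_left fun h => hαP (h ▸ inf_le_right)
  have h₁ := finrank_lt_finrank_of_lt hlt
  have h₂ := finrank_sup_add_finrank_inf_eq α (S ⊓ P)
  rw [← inf_assoc, inf_of_le_left hαS] at h₂
  have h₃ := finrank_mono (sup_le hαS inf_le_left : α ⊔ (S ⊓ P) ≤ S)
  omega

variable [FiniteDimensional K V] {g : ℕ}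

lemma projIndex.exists_polar_ne_zero (hgi : projIndex Q g) (hW : isGenerator Q g W) {v : V}
    (hv : Q v = 0) (hvW : v ∉ W) : ∃ w ∈ W, polar Q w v ≠ 0 := by
  by_contra! hperp
  have hlt : W < W ⊔ K ∙ v :=
    lt_of_le_of_ne le_sup_left fun h => hvW (h ▸ mem_sup_right (mem_span_singleton_self v))
  have := finrank_lt_finrank_of_lt hlt
  have := hgi.2 _ (hW.1.sup_span_singleton hv hperp)
  have := hW.2
  omega

lemma projIndex.polar_ne_zero_of_hyperplane (hgi : projIndex Q g) (hW : isGenerator Q g W)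
    {H : Submodule K V} (hHW : H ≤ W) (hd : finrank K H + 1 = finrank K W) {x y : V}
    (hx : x ∈ W) (hxH : x ∉ H) (hy : Q y = 0) (hyW : y ∉ W) (hperp : ∀ h ∈ H, polar Q h y = 0) :
    polar Q x y ≠ 0 := by
  intro hxy
  obtain ⟨w, hw, hwy⟩ := hgi.exists_polar_ne_zero hW hy hyW
  rw [← sup_span_singleton_eq_of_finrank_add_one hHW hx hxH hd] at hw
  obtain ⟨h, hh, z, hz, rfl⟩ := mem_sup.mp hw
  obtain ⟨c, rfl⟩ := mem_span_singleton.mp hz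
  simp [polar_add_left, polar_smul_left, hperp h hh, hxy] at hwy

end Quadric

lemma Projectivization.rep_injective {K V : Type*} [Field K] [AddCommGroup V] [Module K V] :
    Function.Injective (Projectivization.rep : Projectivization K V → V) :=
  fun _ _ h => Quotient.out_injective (Subtype.ext h)

lemma Projectivization.submodule_le_iff {K V : Type*} [Field K] [AddCommGroup V] [Module K V]
    {v : Projectivization K V} {W : Submodule K V} : v.submodule ≤ W ↔ v.rep ∈ W := by
  rw [Projectivization.submodule_eq, span_singleton_le_iff_mem]

section SwitchedGraph

open Projectivization

variable {K V : Type*} [Field K] [AddCommGroup V] [Module K V] {Q : QuadraticForm K V}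
  {α W : Submodule K V} {p q : QuadricPoint Q}

lemma typeII_of_rep_mem (hW : totallySingular Q W) (hαW : α ≤ W) (hp : p.1.rep ∈ W)
    (hpα : p.1.rep ∉ α) : typeII Q α p :=
  ⟨hpα, hW.mono (sup_le hαW (submodule_le_iff.mpr hp))⟩

lemma not_typeIII_of_rep_mem (hW : totallySingular Q W) (hαW : α ≤ W) (hp : p.1.rep ∈ W) :
    ¬ typeIII Q α p :=
  fun h => h.2 (hW.mono (sup_le hαW (submodule_le_iff.mpr hp)))

lemma gammaS_adj_of_not_mixedPair (hpq : p ≠ q) (hmix : ¬ mixedPair Q α p q)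
    (hW : totallySingular Q W) (hp : p.1.rep ∈ W) (hq : q.1.rep ∈ W) : (gammaS Q α).Adj p q :=
  ⟨hpq, fun h => absurd h hmix,
    fun _ => hW.mono (sup_le (submodule_le_iff.mpr hp) (submodule_le_iff.mpr hq))⟩

lemma gammaS_adj_of_mixedPair (hpq : p ≠ q) (hmix : mixedPair Q α p q) (hsec : secant2 Q p q) :
    (gammaS Q α).Adj p q :=
  ⟨hpq, fun _ => hsec, fun h => absurd hmix h⟩

lemma gammaS_adj_of_le (hpq : p ≠ q) (hW : totallySingular Q W) (hαW : α ≤ W)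
    (hp : p.1.rep ∈ W) (hq : q.1.rep ∈ W) : (gammaS Q α).Adj p q :=
  gammaS_adj_of_not_mixedPair hpq
    (by rintro (⟨-, h⟩ | ⟨-, h⟩) <;> exact not_typeIII_of_rep_mem hW hαW ‹_› h) hW hp hq

lemma gammaS_adj_of_not_typeII (hpq : p ≠ q) (hW : totallySingular Q W) (hp : p.1.rep ∈ W)
    (hq : q.1.rep ∈ W) (hp' : ¬ typeII Q α p) (hq' : ¬ typeII Q α q) : (gammaS Q α).Adj p q :=
  gammaS_adj_of_not_mixedPair hpq (by rintro (⟨h, -⟩ | ⟨h, -⟩) <;> contradiction) hW hp hq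

end SwitchedGraph

section Generators

variable {K V : Type*} [Field K] [AddCommGroup V] [Module K V] [FiniteDimensional K V]
  {Q : QuadraticForm K V} {g : ℕ} {α S P : Submodule K V}

lemma not_totallySingular_sup_of_mem_sdiff (hgi : projIndex Q g) (hS : isGenerator Q g S)
    (hP : isGenerator Q g P) (hαS : α ≤ S) (hαP : ¬ α ≤ P) (hSP : finrank K ↥(S ⊓ P) = g)
    {v : V} (hvP : v ∈ P) (hvS : v ∉ S) : ¬ totallySingular Q (α ⊔ K ∙ v) := by
  intro hts
  obtain ⟨a, haα, haP⟩ := SetLike.not_le_iff_exists.mp hαP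
  refine hgi.polar_ne_zero_of_hyperplane hP inf_le_right (by rw [hSP, hP.2]) hvP
    (fun h => hvS h.1) (hS.1 a (hαS haα)) haP
    (fun h hh => hS.1.polar_eq_zero_s10 hh.1 (hαS haα)) ?_
  exact hts.polar_eq_zero_s10 (mem_sup_right (mem_span_singleton_self v)) (mem_sup_left haα)

lemma polar_ne_zero_of_mem_sdiff (hgi : projIndex Q g) (hS : isGenerator Q g S)
    (hP : isGenerator Q g P) (hSP : finrank K ↥(S ⊓ P) = g) {u v : V} (huS : u ∈ S)
    (huP : u ∉ P) (hvP : v ∈ P) (hvS : v ∉ S) : polar Q u v ≠ 0 :=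
  hgi.polar_ne_zero_of_hyperplane hS inf_le_left (by rw [hSP, hS.2]) huS (fun h => huP h.2)
    (hP.1 v hvP) hvS (fun h hh => hP.1.polar_eq_zero_s10 hh.2 hvP)

lemma typeIII_of_rep_mem_sdiff (hgi : projIndex Q g) (hS : isGenerator Q g S)
    (hP : isGenerator Q g P) (hαS : α ≤ S) (hαP : ¬ α ≤ P) (hSP : finrank K ↥(S ⊓ P) = g)
    {p : QuadricPoint Q} (hpP : p.1.rep ∈ P) (hpS : p.1.rep ∉ S) : typeIII Q α p := by
  refine ⟨fun h => hpS (hαS h), ?_⟩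
  rw [Projectivization.submodule_eq]
  exact not_totallySingular_sup_of_mem_sdiff hgi hS hP hαS hαP hSP hpP hpS

end Generators

section ZModTwo

open Projectivization

variable {V : Type*} [AddCommGroup V] [Module (ZMod 2) V] {Q : QuadraticForm (ZMod 2) V}

lemma Projectivization.rep_mk_zmod_two (v : V) (hv : v ≠ 0) : (mk (ZMod 2) v hv).rep = v := by
  obtain ⟨a, ha⟩ := exists_smul_eq_mk_rep (ZMod 2) v hv
  rw [← ha, Subsingleton.elim a 1, one_smul]

/-- Over `𝔽₂` a line has three points `p`, `q`, `p + q`, and `Q (p + q)` is the polar value. -/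
lemma secant2_of_polar_ne_zero {p q : QuadricPoint Q} (hpq : p ≠ q)
    (h : polar Q p.1.rep q.1.rep ≠ 0) : secant2 Q p q := by
  suffices hline : {x : Projectivization (ZMod 2) V |
      x.rep ∈ p.1.submodule ⊔ q.1.submodule ∧ Q x.rep = 0} = {p.1, q.1} by
    rw [secant2, hline, Set.ncard_pair (Subtype.coe_ne_coe.mpr hpq)]
  ext x
  simp only [Set.mem_ofPred_eq, Set.mem_insert_iff, Set.mem_singleton_iff, submodule_eq,
    ← span_insert, mem_span_pair]
  constructor
  · rintro ⟨⟨a, b, hx⟩, hQx⟩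
    have hF₂ : ∀ c : ZMod 2, c = 0 ∨ c = 1 := by decide
    rcases hF₂ a with rfl | rfl <;> rcases hF₂ b with rfl | rfl <;>
      simp only [zero_smul, one_smul, zero_add, add_zero] at hx
    · exact absurd hx.symm x.rep_nonzero
    · exact Or.inr (rep_injective hx.symm)
    · exact Or.inl (rep_injective hx.symm)
    · rw [← hx] at hQx
      exact absurd (by simp [polar, hQx, p.2, q.2]) h
  · rintro (rfl | rfl)
    · exact ⟨⟨1, 0, by simp⟩, p.2⟩
    · exact ⟨⟨0, 1, by simp⟩, q.2⟩

lemma ncard_setOf_rep_mem {T : Set V} (hT : ∀ v ∈ T, Q v = 0) :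
    {p : QuadricPoint Q | p.1.rep ∈ T}.ncard = (T \ {0}).ncard := by
  rw [← Set.ncard_image_of_injective _ (rep_injective.comp Subtype.val_injective)]
  congr 1
  ext v
  constructor
  · rintro ⟨p, hp, rfl⟩
    exact ⟨hp, p.1.rep_nonzero⟩
  · rintro ⟨hvT, hv0 : v ≠ 0⟩
    refine ⟨⟨mk _ v hv0, by rw [rep_mk_zmod_two]; exact hT v hvT⟩, ?_, rep_mk_zmod_two v hv0⟩
    simpa [rep_mk_zmod_two] using hvT

lemma ncard_coe_submodule [Finite V] (W : Submodule (ZMod 2) V) :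
    (W : Set V).ncard = 2 ^ finrank (ZMod 2) W := by
  rw [← Nat.card_coe_set_eq, SetLike.coe_sort_coe, natCard_eq_pow_finrank (K := ZMod 2),
    Nat.card_zmod]

end ZModTwo

def classB {X : Type*} (a s p : Set X) : Set X :=
  {x | (x ∈ a ∧ x ∈ p) ∨ (x ∈ s ∧ x ∉ a ∧ x ∉ p) ∨ (x ∈ p ∧ x ∉ s)}

lemma classB_subset_union {X : Type*} {a s p : Set X} (has : a ⊆ s) : classB a s p ⊆ s ∪ p := by
  rintro x (⟨hx, -⟩ | ⟨hx, -⟩ | ⟨hx, -⟩)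
  exacts [Or.inl (has hx), Or.inl hx, Or.inr hx]

lemma ncard_classB_add {X : Type*} [Finite X] {a s p : Set X} (has : a ⊆ s) :
    (classB a s p).ncard + a.ncard + 2 * (s ∩ p).ncard
      = s.ncard + p.ncard + 2 * (a ∩ p).ncard := by
  classical
  have := Fintype.ofFinite X
  have hsum : ∀ t : Set X, t.ncard = ∑ x, if x ∈ t then 1 else 0 := fun t => by
    rw [Finset.sum_boole, Set.ncard_eq_toFinset_card']
    simp
  simp only [hsum, Finset.mul_sum, ← Finset.sum_add_distrib]
  refine Finset.sum_congr rfl fun x _ => ?_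
  have := @has x
  by_cases ha : x ∈ a <;> by_cases hs : x ∈ s <;> by_cases hp : x ∈ p <;>
    simp [classB, ha, hs, hp] at this ⊢

section Count

variable {V : Type*} [AddCommGroup V] [Module (ZMod 2) V] [Finite V] {Q : QuadraticForm (ZMod 2) V}
  {g : ℕ} {α S P : Submodule (ZMod 2) V}

lemma ncard_classB (hS : isGenerator Q g S) (hP : isGenerator Q g P) (hαS : α ≤ S)
    (hαP : ¬ α ≤ P) (hSP : finrank (ZMod 2) ↥(S ⊓ P) = g) :
    (classB α S P : Set V).ncard = 2 ^ (g + 1) := by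
  have hcount := ncard_classB_add (p := (P : Set V)) (show (α : Set V) ⊆ S from hαS)
  have hα : finrank (ZMod 2) ↥(α ⊓ P) + 1 = finrank (ZMod 2) α :=
    finrank_inf_add_one_of_not_le hαS hαP (by rw [hSP, hS.2])
  simp only [← coe_inf, ncard_coe_submodule, hS.2, hP.2, hSP, ← hα] at hcount
  rw [pow_succ, pow_succ] at hcount
  omega

end Count

section Clique

variable {V : Type*} [AddCommGroup V] [Module (ZMod 2) V] [FiniteDimensional (ZMod 2) V]
  {Q : QuadraticForm (ZMod 2) V} {g : ℕ} {α S P : Submodule (ZMod 2) V}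

lemma isClique_classB (hgi : projIndex Q g) (hS : isGenerator Q g S) (hP : isGenerator Q g P)
    (hαS : α ≤ S) (hαP : ¬ α ≤ P) (hSP : finrank (ZMod 2) ↥(S ⊓ P) = g) :
    (gammaS Q α).IsClique {p : QuadricPoint Q | p.1.rep ∈ classB α S P} := by
  have hmem : ∀ v ∈ classB (α : Set V) S P, (v ∉ S → v ∈ P) ∧ (v ∉ P → v ∉ α) := by
    intro v hv
    simp only [classB, Set.mem_ofPred_eq, SetLike.mem_coe] at hv
    tauto
  have hnotII : ∀ p : QuadricPoint Q, p.1.rep ∈ classB α S P → p.1.rep ∈ P →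
      ¬ typeII Q α p := by
    rintro p (⟨hpα, -⟩ | ⟨-, -, hpP⟩ | ⟨hpP, hpS⟩) hpP' hII
    · exact hII.1 hpα
    · exact hpP hpP'
    · exact (typeIII_of_rep_mem_sdiff hgi hS hP hαS hαP hSP hpP hpS).2 hII.2
  have hcross : ∀ p q : QuadricPoint Q, p ≠ q → p.1.rep ∈ S → p.1.rep ∉ α → p.1.rep ∉ P →
      q.1.rep ∈ P → q.1.rep ∉ S → (gammaS Q α).Adj p q :=
    fun p q hpq hpS hpα hpP hqP hqS => gammaS_adj_of_mixedPair hpq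
      (Or.inl ⟨typeII_of_rep_mem hS.1 hαS hpS hpα,
        typeIII_of_rep_mem_sdiff hgi hS hP hαS hαP hSP hqP hqS⟩)
      (secant2_of_polar_ne_zero hpq (polar_ne_zero_of_mem_sdiff hgi hS hP hSP hpS hpP hqP hqS))
  intro p hp q hq hpq
  by_cases hpS : p.1.rep ∈ S <;> by_cases hqS : q.1.rep ∈ S
  · exact gammaS_adj_of_le hpq hS.1 hαS hpS hqS
  · have hqP := (hmem _ hq).1 hqS
    by_cases hpP : p.1.rep ∈ P
    · exact gammaS_adj_of_not_typeII hpq hP.1 hpP hqP (hnotII p hp hpP) (hnotII q hq hqP)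
    · exact hcross p q hpq hpS ((hmem _ hp).2 hpP) hpP hqP hqS
  · have hpP := (hmem _ hp).1 hpS
    by_cases hqP : q.1.rep ∈ P
    · exact gammaS_adj_of_not_typeII hpq hP.1 hpP hqP (hnotII p hp hpP) (hnotII q hq hqP)
    · exact (hcross q p hpq.symm hqS ((hmem _ hq).2 hqP) hqP hpP hpS).symm
  · have hpP := (hmem _ hp).1 hpS
    have hqP := (hmem _ hq).1 hqS
    exact gammaS_adj_of_not_typeII hpq hP.1 hpP hqP (hnotII p hp hpP) (hnotII q hq hqP)

end Clique

theorem classB_is_clique_general (n g : ℕ)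
    (Q : QuadraticForm (ZMod 2) (Fin (n + 1) → ZMod 2))
    (hgi : projIndex Q g)
    (α : Submodule (ZMod 2) (Fin (n + 1) → ZMod 2))
    (S P : Submodule (ZMod 2) (Fin (n + 1) → ZMod 2))
    (hS : isGenerator Q g S) (hP : isGenerator Q g P)
    (hαS : α ≤ S) (hαP : ¬ α ≤ P)
    (hSP : Module.finrank (ZMod 2) ↥(S ⊓ P) = g) :
    (gammaS Q α).IsClique
      {p : QuadricPoint Q | (p.1.rep ∈ α ∧ p.1.rep ∈ P) ∨
        (p.1.rep ∈ S ∧ p.1.rep ∉ α ∧ p.1.rep ∉ P) ∨ (p.1.rep ∈ P ∧ p.1.rep ∉ S)} ∧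
    {p : QuadricPoint Q | (p.1.rep ∈ α ∧ p.1.rep ∈ P) ∨
        (p.1.rep ∈ S ∧ p.1.rep ∉ α ∧ p.1.rep ∉ P) ∨ (p.1.rep ∈ P ∧ p.1.rep ∉ S)}.ncard
      = 2 ^ (g + 1) - 1 := by
  refine ⟨isClique_classB hgi hS hP hαS hαP hSP, ?_⟩
  have hsing : ∀ v ∈ classB (α : Set (Fin (n + 1) → ZMod 2)) S P, Q v = 0 := fun v hv =>
    (classB_subset_union hαS hv).elim (hS.1 v) (hP.1 v)
  change {p : QuadricPoint Q | p.1.rep ∈ classB (α : Set _) S P}.ncard = _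
  have h0 : (0 : Fin (n + 1) → ZMod 2) ∈ classB (α : Set _) S P := Or.inl ⟨α.zero_mem, P.zero_mem⟩
  rw [ncard_setOf_rep_mem hsing, Set.ncard_sdiff_singleton_of_mem h0,
    ncard_classB hS hP hαS hαP hSP]

theorem classB_is_clique (n g s : ℕ) (hg : 1 ≤ g) (hs : s < g)
    (Q : QuadraticForm (ZMod 2) (Fin (n + 1) → ZMod 2)) (hQ : quadricNonsingular Q)
    (hgi : projIndex Q g)
    (α : Submodule (ZMod 2) (Fin (n + 1) → ZMod 2)) (hα : totallySingular Q α)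
    (hαd : Module.finrank (ZMod 2) ↥α = s + 1)
    (S P : Submodule (ZMod 2) (Fin (n + 1) → ZMod 2))
    (hS : isGenerator Q g S) (hP : isGenerator Q g P)
    (hαS : α ≤ S) (hαP : ¬ α ≤ P)
    (hSP : Module.finrank (ZMod 2) ↥(S ⊓ P) = g) :
    (gammaS Q α).IsClique
      {p : QuadricPoint Q | (p.1.rep ∈ α ∧ p.1.rep ∈ P) ∨
        (p.1.rep ∈ S ∧ p.1.rep ∉ α ∧ p.1.rep ∉ P) ∨ (p.1.rep ∈ P ∧ p.1.rep ∉ S)} ∧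
    {p : QuadricPoint Q | (p.1.rep ∈ α ∧ p.1.rep ∈ P) ∨
        (p.1.rep ∈ S ∧ p.1.rep ∉ α ∧ p.1.rep ∉ P) ∨ (p.1.rep ∈ P ∧ p.1.rep ∉ S)}.ncard
      = 2 ^ (g + 1) - 1 :=
  classB_is_clique_general n g Q hgi α S P hS hP hαS hαP hSP
end

section
/- If C is a clique of size 2^{g+1}−1 in the switched graph Γ_s (0 ≤ s < g) that contains no vertex of type (iii), then the points of C form a generator of Q containing α. -/
/-! Since no vertex of `C` has type (iii), no pair in `C` is mixed, so `C` is a clique of the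
point-graph whose points each span a singular space with `α`. Hence `α` together with `C` spans a
totally singular subspace `W`, of dimension at most `g + 1`. Over `GF(2)` the points of `W` are its
nonzero vectors, so `2 ^ (g + 1) - 1 = |C| ≤ 2 ^ dim W - 1` forces `dim W = g + 1`, and then `C`
fills all points of `W`. -/

open QuadraticMap Submodule

section

variable {K V : Type*} [Field K] [AddCommGroup V] [Module K V] {Q : QuadraticForm K V}

lemma polar_eq_zero_of_totallySingular {W : Submodule K V} (hW : totallySingular Q W) {v w : V}
    (hv : v ∈ W) (hw : w ∈ W) : polar Q v w = 0 := by
  simp [polar, hW v hv, hW w hw, hW (v + w) (W.add_mem hv hw)]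

lemma totallySingular_span {S : Set V} (hQ : ∀ v ∈ S, Q v = 0)
    (hpolar : ∀ v ∈ S, ∀ w ∈ S, polar Q v w = 0) : totallySingular Q (span K S) := by
  have hpolar_span : ∀ v ∈ span K S, ∀ w ∈ span K S, polar Q v w = 0 := by
    intro v hv w hw
    induction hv, hw using span_induction₂ with
    | mem_mem v w hv hw => exact hpolar v hv w hw
    | zero_left => exact polar_zero_left _ _
    | zero_right => exact polar_zero_right _ _
    | add_left _ _ _ _ _ _ h₁ h₂ => rw [polar_add_left, h₁, h₂, add_zero]
    | add_right _ _ _ _ _ _ h₁ h₂ => rw [polar_add_right, h₁, h₂, add_zero]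
    | smul_left _ _ _ _ _ h => rw [polar_smul_left, h, smul_zero]
    | smul_right _ _ _ _ _ h => rw [polar_smul_right, h, smul_zero]
  intro v hv
  induction hv using span_induction with
  | mem v hv => exact hQ v hv
  | zero => exact Q.map_zero
  | add v w hv hw ihv ihw =>
    have h := hpolar_span v hv w hw
    rwa [polar, ihv, ihw, sub_zero, sub_zero] at h
  | smul a v _ ih => rw [QuadraticMap.map_smul, ih, smul_zero]

lemma Projectivization.rep_mem_submodule (p : Projectivization K V) : p.rep ∈ p.submodule := by
  rw [Projectivization.submodule_eq]
  exact mem_span_singleton_self _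

lemma totallySingular_sup_of_not_typeIII {α : Submodule K V} (hα : totallySingular Q α)
    {p : QuadricPoint Q} (hp : ¬ typeIII Q α p) : totallySingular Q (α ⊔ p.1.submodule) := by
  by_cases hpα : p.1.rep ∈ α
  · rwa [sup_eq_left.mpr <| by
      rw [Projectivization.submodule_eq]; exact (span_singleton_le_iff_mem _ _).mpr hpα]
  · exact not_not.mp fun h => hp ⟨hpα, h⟩

lemma gammaS_adj_iff_pointGraph_adj {α : Submodule K V} {p q : QuadricPoint Q}
    (hp : ¬ typeIII Q α p) (hq : ¬ typeIII Q α q) :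
    (gammaS Q α).Adj p q ↔ (pointGraph Q).Adj p q := by
  have hmixed : ¬ mixedPair Q α p q := by
    rintro (⟨-, h⟩ | ⟨-, h⟩)
    exacts [hq h, hp h]
  exact ⟨fun ⟨hne, _, h⟩ => ⟨hne, h hmixed⟩,
    fun ⟨hne, h⟩ => ⟨hne, fun h' => absurd h' hmixed, fun _ => h⟩⟩

lemma totallySingular_span_union_of_isClique {α : Submodule K V} (hα : totallySingular Q α)
    {C : Set (QuadricPoint Q)} (hC : (pointGraph Q).IsClique C)
    (hCα : ∀ p ∈ C, totallySingular Q (α ⊔ p.1.submodule)) :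
    totallySingular Q (span K ((α : Set V) ∪ (fun p : QuadricPoint Q => p.1.rep) '' C)) := by
  refine totallySingular_span ?_ ?_
  · rintro v (hv | ⟨p, -, rfl⟩)
    exacts [hα v hv, p.2]
  · rintro v (hv | ⟨p, hp, rfl⟩) w (hw | ⟨q, hq, rfl⟩)
    · exact polar_eq_zero_of_totallySingular hα hv hw
    · exact polar_eq_zero_of_totallySingular (hCα q hq) (mem_sup_left hv)
        (mem_sup_right q.1.rep_mem_submodule)
    · exact polar_eq_zero_of_totallySingular (hCα p hp) (mem_sup_right p.1.rep_mem_submodule)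
        (mem_sup_left hw)
    · obtain rfl | hpq := eq_or_ne p q
      · rw [polar_self, p.2, smul_zero]
      · exact polar_eq_zero_of_totallySingular (hC hp hq hpq).2
          (mem_sup_left p.1.rep_mem_submodule) (mem_sup_right q.1.rep_mem_submodule)

lemma QuadricPoint.rep_injective : Function.Injective fun p : QuadricPoint Q => p.1.rep := by
  intro p q h
  apply Subtype.ext
  rw [← p.1.mk_rep, ← q.1.mk_rep]
  simp only [h]

lemma ncard_le_of_rep_mem [Finite V] {W : Submodule K V} {T : Set (QuadricPoint Q)}
    (hT : ∀ p ∈ T, p.1.rep ∈ W) : T.ncard ≤ Nat.card K ^ Module.finrank K W - 1 := by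
  calc T.ncard = ((fun p : QuadricPoint Q => p.1.rep) '' T).ncard :=
        (Set.ncard_image_of_injective T QuadricPoint.rep_injective).symm
    _ ≤ ((W : Set V) \ {0}).ncard :=
        Set.ncard_le_ncard (by rintro _ ⟨p, hp, rfl⟩; exact ⟨hT p hp, p.1.rep_nonzero⟩)
    _ = Nat.card W - 1 := by rw [Set.ncard_sdiff_singleton_of_mem W.zero_mem]; rfl
    _ = Nat.card K ^ Module.finrank K W - 1 := by rw [Module.natCard_eq_pow_finrank (K := K)]

end

lemma finrank_eq_and_eq_setOf_rep_mem {V : Type*} [AddCommGroup V] [Module (ZMod 2) V] [Finite V]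
    {Q : QuadraticForm (ZMod 2) V}
    {W : Submodule (ZMod 2) V} {C : Set (QuadricPoint Q)} {d : ℕ}
    (hCW : ∀ p ∈ C, p.1.rep ∈ W) (hWd : Module.finrank (ZMod 2) W ≤ d)
    (hC : C.ncard = 2 ^ d - 1) :
    Module.finrank (ZMod 2) W = d ∧ C = {p | p.1.rep ∈ W} := by
  have hbound : ∀ T : Set (QuadricPoint Q), (∀ p ∈ T, p.1.rep ∈ W) →
      T.ncard ≤ 2 ^ Module.finrank (ZMod 2) W - 1 := fun T hT => by
    simpa [Nat.card_zmod] using ncard_le_of_rep_mem hT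
  have hd : Module.finrank (ZMod 2) W = d := by
    have h := hC ▸ hbound C hCW
    have h2 : 2 ^ d ≤ 2 ^ Module.finrank (ZMod 2) W := by
      have := Nat.one_le_two_pow (n := d)
      have := Nat.one_le_two_pow (n := Module.finrank (ZMod 2) W)
      omega
    exact le_antisymm hWd ((Nat.pow_le_pow_iff_right (by norm_num)).mp h2)
  refine ⟨hd, Set.eq_of_subset_of_ncard_le hCW ?_ (Set.toFinite _)⟩
  rw [hC, ← hd]
  exact hbound _ fun _ hp => hp

theorem g_clique_no_typeIII_is_classA_general (n g : ℕ)
    (Q : QuadraticForm (ZMod 2) (Fin (n + 1) → ZMod 2))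
    (hgi : projIndex Q g)
    (α : Submodule (ZMod 2) (Fin (n + 1) → ZMod 2)) (hα : totallySingular Q α)
    (C : Set (QuadricPoint Q)) (hC : (gammaS Q α).IsClique C)
    (hcard : C.ncard = 2 ^ (g + 1) - 1)
    (hno3 : ∀ p ∈ C, ¬ typeIII Q α p) :
    ∃ W : Submodule (ZMod 2) (Fin (n + 1) → ZMod 2),
      isGenerator Q g W ∧ α ≤ W ∧ ∀ p : QuadricPoint Q, p ∈ C ↔ p.1.rep ∈ W := by
  have hC' : (pointGraph Q).IsClique C := fun p hp q hq hpq =>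
    (gammaS_adj_iff_pointGraph_adj (hno3 p hp) (hno3 q hq)).mp (hC hp hq hpq)
  set W := span (ZMod 2) ((α : Set _) ∪ (fun p : QuadricPoint Q => p.1.rep) '' C)
  have hW : totallySingular Q W := totallySingular_span_union_of_isClique hα hC'
    fun p hp => totallySingular_sup_of_not_typeIII hα (hno3 p hp)
  have hCW : ∀ p ∈ C, p.1.rep ∈ W := fun p hp => subset_span (Or.inr ⟨p, hp, rfl⟩)
  obtain ⟨hd, hCeq⟩ := finrank_eq_and_eq_setOf_rep_mem hCW (hgi.2 W hW) hcard
  exact ⟨W, ⟨hW, hd⟩, fun v hv => subset_span (Or.inl hv), Set.ext_iff.mp hCeq⟩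

theorem g_clique_no_typeIII_is_classA (n g s : ℕ) (hg : 1 ≤ g) (hs : s < g)
    (Q : QuadraticForm (ZMod 2) (Fin (n + 1) → ZMod 2)) (hQ : quadricNonsingular Q)
    (hgi : projIndex Q g)
    (α : Submodule (ZMod 2) (Fin (n + 1) → ZMod 2)) (hα : totallySingular Q α)
    (hαd : Module.finrank (ZMod 2) ↥α = s + 1)
    (C : Set (QuadricPoint Q)) (hC : (gammaS Q α).IsClique C)
    (hcard : C.ncard = 2 ^ (g + 1) - 1)
    (hno3 : ∀ p ∈ C, ¬ typeIII Q α p) :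
    ∃ W : Submodule (ZMod 2) (Fin (n + 1) → ZMod 2),
      isGenerator Q g W ∧ α ≤ W ∧ ∀ p : QuadricPoint Q, p ∈ C ↔ p.1.rep ∈ W :=
  g_clique_no_typeIII_is_classA_general n g Q hgi α hα C hC hcard hno3
end
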